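/- arXiv:2506.00408 — 4 statements merged into one kernel-verified Lean document; each statement's English description precedes it below -/
import Mathlib

section
/- Let A, B, C be real numbers with A > 0, C > 0 and B > 2√(AC), and let r₁ = (B − √(B² − 4AC))/(2A) and r₂ = (B + √(B² − 4AC))/(2A) be the two (positive) roots of −A r² + B r − C = 0. Then ∫_{r₁}^{r₂} √(−A + B/r − C/r²) dr = π (B/(2√A) − √C). -/
/-!
By Vieta, `-A + B/r - C/r² = A (r₂ - r)(r - r₁)/r²`, so the integral is `√A` times
`∫_a^b √((b - r)(r - a))/r dr` with `a = r₁`, `b = r₂`. With `s = √((b - r)(r - a))` the integrand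
is `((a + b) r - r² - a b)/(r s)`; besides `s` itself, its primitive consists of the arcsines of the
affine maps sending `r ∈ [a, b]` and `1/r ∈ [1/b, 1/a]` onto `[-1, 1]`. At the endpoints `s`
vanishes and the arcsines are `±π/2`, which gives `π ((a + b)/2 - √(a b))`.
-/

open Real intervalIntegral Set

theorem HasDerivAt.arcsin_of_one_sub_sq_eq_sq {f : ℝ → ℝ} {f' c x : ℝ} (hf : HasDerivAt f f' x)
    (hc : 0 < c) (h : 1 - f x ^ 2 = c ^ 2) :
    HasDerivAt (fun y => arcsin (f y)) (f' / c) x := by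
  have hlt : f x ^ 2 < 1 := by nlinarith
  have hne₁ : f x ≠ -1 := by rintro hfx; rw [hfx] at hlt; norm_num at hlt
  have hne₂ : f x ≠ 1 := by rintro hfx; rw [hfx] at hlt; norm_num at hlt
  refine ((hasDerivAt_arcsin hne₁ hne₂).comp x hf).congr_deriv ?_
  rw [h, sqrt_sq hc.le]
  ring

section TurningPoints

variable {a b r : ℝ}

noncomputable def sommerfeldPrimitive (a b r : ℝ) : ℝ :=
  √((b - r) * (r - a)) + (a + b) / 2 * arcsin ((2 * r - a - b) / (b - a))
    + √(a * b) * arcsin ((2 * a * b - (a + b) * r) / (r * (b - a)))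

theorem hasDerivAt_sqrt_mul_sub (hr : r ∈ Ioo a b) :
    HasDerivAt (fun r => √((b - r) * (r - a))) ((a + b - 2 * r) / (2 * √((b - r) * (r - a)))) r := by
  have hpos : 0 < (b - r) * (r - a) := mul_pos (by linarith [hr.2]) (by linarith [hr.1])
  have hpoly : HasDerivAt (fun r => (b - r) * (r - a)) (a + b - 2 * r) r := by
    refine (((hasDerivAt_id r).const_sub b).mul ((hasDerivAt_id r).sub_const a)).congr_deriv ?_
    simp only [id_eq]
    ring
  exact hpoly.sqrt hpos.ne'

theorem hasDerivAt_arcsin_chord (hr : r ∈ Ioo a b) :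
    HasDerivAt (fun r => arcsin ((2 * r - a - b) / (b - a))) (1 / √((b - r) * (r - a))) r := by
  have hpos : 0 < (b - r) * (r - a) := mul_pos (by linarith [hr.2]) (by linarith [hr.1])
  have hba : 0 < b - a := by linarith [hr.1, hr.2]
  set s := √((b - r) * (r - a))
  have hs_sq : s ^ 2 = (b - r) * (r - a) := sq_sqrt hpos.le
  have hlin : HasDerivAt (fun r => (2 * r - a - b) / (b - a)) (2 / (b - a)) r := by
    simpa using ((((hasDerivAt_id r).const_mul 2).sub_const a).sub_const b).div_const (b - a)
  have hid : 1 - ((2 * r - a - b) / (b - a)) ^ 2 = (2 * s / (b - a)) ^ 2 := by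
    field_simp
    linear_combination (-4) * hs_sq
  refine (hlin.arcsin_of_one_sub_sq_eq_sq (by positivity) hid).congr_deriv ?_
  field_simp

theorem hasDerivAt_arcsin_inv_chord (ha : 0 < a) (hr : r ∈ Ioo a b) :
    HasDerivAt (fun r => arcsin ((2 * a * b - (a + b) * r) / (r * (b - a))))
      (-√(a * b) / (r * √((b - r) * (r - a)))) r := by
  have hpos : 0 < (b - r) * (r - a) := mul_pos (by linarith [hr.2]) (by linarith [hr.1])
  have hba : 0 < b - a := by linarith [hr.1, hr.2]
  have hr0 : 0 < r := ha.trans hr.1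
  have hab : 0 < a * b := mul_pos ha (by linarith [hr.1, hr.2])
  set s := √((b - r) * (r - a))
  have hs : 0 < s := sqrt_pos.2 hpos
  have hs_sq : s ^ 2 = (b - r) * (r - a) := sq_sqrt hpos.le
  have hg_sq : √(a * b) ^ 2 = a * b := sq_sqrt hab.le
  have hrat : HasDerivAt (fun r => (2 * a * b - (a + b) * r) / (r * (b - a)))
      (-(2 * a * b) / (r ^ 2 * (b - a))) r := by
    have hnum : HasDerivAt (fun r => 2 * a * b - (a + b) * r) (-(a + b)) r := by
      simpa using ((hasDerivAt_id r).const_mul (a + b)).const_sub (2 * a * b)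
    have hden : HasDerivAt (fun r => r * (b - a)) (b - a) r := by
      simpa using (hasDerivAt_id r).mul_const (b - a)
    refine (hnum.div hden (by positivity)).congr_deriv ?_
    field_simp
    ring
  have hid : 1 - ((2 * a * b - (a + b) * r) / (r * (b - a))) ^ 2
      = (2 * √(a * b) * s / (r * (b - a))) ^ 2 := by
    field_simp
    linear_combination (-4) * (a * b) * hs_sq - 4 * s ^ 2 * hg_sq
  refine (hrat.arcsin_of_one_sub_sq_eq_sq (by positivity) hid).congr_deriv ?_
  field_simp
  linear_combination hg_sq

theorem hasDerivAt_sommerfeldPrimitive (ha : 0 < a) (hr : r ∈ Ioo a b) :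
    HasDerivAt (sommerfeldPrimitive a b) (√((b - r) * (r - a)) / r) r := by
  have hpos : 0 < (b - r) * (r - a) := mul_pos (by linarith [hr.2]) (by linarith [hr.1])
  have hr0 : 0 < r := ha.trans hr.1
  have hab : 0 < a * b := mul_pos ha (by linarith [hr.1, hr.2])
  have hs_sq : √((b - r) * (r - a)) ^ 2 = (b - r) * (r - a) := sq_sqrt hpos.le
  have hg_sq : √(a * b) ^ 2 = a * b := sq_sqrt hab.le
  refine (((hasDerivAt_sqrt_mul_sub hr).add
    ((hasDerivAt_arcsin_chord hr).const_mul ((a + b) / 2))).add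
    ((hasDerivAt_arcsin_inv_chord ha hr).const_mul √(a * b))).congr_deriv ?_
  field_simp
  linear_combination (-2) * hg_sq - 2 * hs_sq

theorem continuousOn_sommerfeldPrimitive (ha : 0 < a) (hab : a < b) :
    ContinuousOn (sommerfeldPrimitive a b) (Icc a b) := by
  have hden : ∀ r ∈ Icc a b, r * (b - a) ≠ 0 := fun r hr =>
    (mul_pos (ha.trans_le hr.1) (sub_pos.2 hab)).ne'
  unfold sommerfeldPrimitive
  fun_prop (disch := assumption)

theorem sommerfeldPrimitive_right (ha : 0 < a) (hab : a < b) :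
    sommerfeldPrimitive a b b = π / 2 * ((a + b) / 2 - √(a * b)) := by
  have hba : b - a ≠ 0 := (sub_pos.2 hab).ne'
  have hb : b ≠ 0 := (ha.trans hab).ne'
  have h₁ : (2 * b - a - b) / (b - a) = 1 := by field_simp; ring
  have h₂ : (2 * a * b - (a + b) * b) / (b * (b - a)) = -1 := by field_simp; ring
  simp only [sommerfeldPrimitive, h₁, h₂, sub_self, zero_mul, sqrt_zero, arcsin_one, arcsin_neg_one]
  ring

theorem sommerfeldPrimitive_left (ha : 0 < a) (hab : a < b) :
    sommerfeldPrimitive a b a = -(π / 2 * ((a + b) / 2 - √(a * b))) := by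
  have hba : b - a ≠ 0 := (sub_pos.2 hab).ne'
  have h₁ : (2 * a - a - b) / (b - a) = -1 := by field_simp; ring
  have h₂ : (2 * a * b - (a + b) * a) / (a * (b - a)) = 1 := by field_simp; ring
  simp only [sommerfeldPrimitive, h₁, h₂, sub_self, mul_zero, sqrt_zero, arcsin_one, arcsin_neg_one]
  ring

theorem integral_sqrt_mul_sub_div_self (ha : 0 < a) (hab : a < b) :
    ∫ r in a..b, √((b - r) * (r - a)) / r = π * ((a + b) / 2 - √(a * b)) := by
  have hint : IntervalIntegrable (fun r => √((b - r) * (r - a)) / r) MeasureTheory.volume a b := by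
    refine ContinuousOn.intervalIntegrable_of_Icc hab.le ?_
    have hr : ∀ r ∈ Icc a b, r ≠ 0 := fun r hr => (ha.trans_le hr.1).ne'
    fun_prop (disch := assumption)
  rw [integral_eq_sub_of_hasDerivAt_of_le hab.le (continuousOn_sommerfeldPrimitive ha hab)
    (fun r hr => hasDerivAt_sommerfeldPrimitive ha hr) hint,
    sommerfeldPrimitive_right ha hab, sommerfeldPrimitive_left ha hab]
  ring

theorem neg_add_div_sub_div_sq_eq (A : ℝ) {r : ℝ} (hr : r ≠ 0) :
    -A + A * (a + b) / r - A * (a * b) / r ^ 2 = A * ((b - r) * (r - a)) / r ^ 2 := by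
  field_simp
  ring

theorem integral_sqrt_neg_add_div_sub_div_sq {A : ℝ} (hA : 0 ≤ A) (ha : 0 < a) (hab : a < b) :
    ∫ r in a..b, √(-A + A * (a + b) / r - A * (a * b) / r ^ 2)
      = π * √A * ((a + b) / 2 - √(a * b)) := by
  have hEq : EqOn (fun r => √(-A + A * (a + b) / r - A * (a * b) / r ^ 2))
      (fun r => √A * (√((b - r) * (r - a)) / r)) (uIcc a b) := by
    intro r hr
    rw [uIcc_of_le hab.le] at hr
    have hr0 : 0 < r := ha.trans_le hr.1
    simp only
    rw [neg_add_div_sub_div_sq_eq A hr0.ne', sqrt_div' _ (sq_nonneg r), sqrt_sq hr0.le,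
      sqrt_mul hA, mul_div_assoc]
  rw [integral_congr hEq, integral_const_mul, integral_sqrt_mul_sub_div_self ha hab]
  ring

end TurningPoints

theorem vieta_of_discrim_eq_sq {K : Type*} [Field K] [NeZero (2 : K)] {A B C D : K} (hA : A ≠ 0)
    (hD : discrim A B C = D ^ 2) :
    A * ((B - D) / (2 * A) + (B + D) / (2 * A)) = B ∧
      A * ((B - D) / (2 * A) * ((B + D) / (2 * A))) = C := by
  rw [discrim] at hD
  constructor
  · field_simp
    ring
  · field_simp
    linear_combination hD

/-- The Sommerfeld-type integral:
for `A, C > 0` and `B > 2√(AC)`, with `r₁ ≤ r₂` the roots of `-A r² + B r - C = 0`,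
`∫_{r₁}^{r₂} √(-A + B/r - C/r²) dr = π (B/(2√A) - √C)`. -/
theorem sommerfeld_integral (A B C : ℝ) (hA : 0 < A) (hC : 0 < C)
    (hB : 2 * Real.sqrt (A * C) < B)
    (r₁ r₂ : ℝ)
    (hr₁ : r₁ = (B - Real.sqrt (B ^ 2 - 4 * A * C)) / (2 * A))
    (hr₂ : r₂ = (B + Real.sqrt (B ^ 2 - 4 * A * C)) / (2 * A)) :
    ∫ r in r₁..r₂, Real.sqrt (-A + B / r - C / r ^ 2)
      = Real.pi * (B / (2 * Real.sqrt A) - Real.sqrt C) := by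
  have hAC : 0 < A * C := mul_pos hA hC
  have hB₀ : 0 < B := (by positivity : 0 ≤ 2 * √(A * C)).trans_lt hB
  have hdisc : 0 < B ^ 2 - 4 * A * C := by nlinarith [sq_sqrt hAC.le, sqrt_nonneg (A * C)]
  set D := √(B ^ 2 - 4 * A * C)
  have hD_sq : D ^ 2 = B ^ 2 - 4 * A * C := sq_sqrt hdisc.le
  have hD₀ : 0 < D := sqrt_pos.2 hdisc
  have hDB : D < B := by nlinarith
  have hr₁₀ : 0 < r₁ := hr₁ ▸ div_pos (by linarith) (by linarith)
  have hr₁₂ : r₁ < r₂ := hr₁ ▸ hr₂ ▸ div_lt_div_of_pos_right (by linarith) (by linarith)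
  obtain ⟨hsum, hprod⟩ := vieta_of_discrim_eq_sq hA.ne' hD_sq.symm
  rw [← hr₁, ← hr₂] at hsum hprod
  rw [← hsum, ← hprod, integral_sqrt_neg_add_div_sub_div_sq hA.le hr₁₀ hr₁₂,
    sqrt_mul hA.le, mul_assoc]
  field_simp
  rw [sq_sqrt hA.le]
  ring
end

section
/- For every real number ε with 0 ≤ ε < 1, (1/(2π)) ∫₀^{2π} ε² sin²φ / (1 + ε cos φ)² dφ = (1 − ε²)^{−1/2} − 1. -/
/-!
With `u = 1 + ε cos φ` and `s = √(1 - ε²)`, the integrand equals `(1/u - 1) + d/dφ (ε sin φ / u)`,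
and `s/u` is the derivative of the eccentric anomaly `E` with respect to the true anomaly `φ`.
So `E/s - φ + ε sin φ / u` is an antiderivative; over one period `E` and `φ` both advance by `2π`
and the last term returns to `0`, giving `2π (1/s - 1)`.
-/

open Real intervalIntegral

theorem one_add_mul_cos_pos {ε : ℝ} (hε : |ε| < 1) (x : ℝ) : 0 < 1 + ε * cos x := by
  have : |ε * cos x| < 1 := by
    rw [abs_mul]
    exact (mul_le_of_le_one_right (abs_nonneg ε) (abs_cos_le_one x)).trans_lt hε
  linarith [neg_abs_le (ε * cos x)]

/-- The continuous branch of `2 arctan (√((1 - ε)/(1 + ε)) tan (x/2))`, i.e. the eccentric anomaly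
at true anomaly `x` on a Kepler ellipse of eccentricity `ε`. -/
noncomputable def eccentricAnomaly (ε x : ℝ) : ℝ :=
  x - 2 * arctan (ε * sin x / (1 + ε * cos x + √(1 - ε ^ 2)))

theorem hasDerivAt_eccentricAnomaly {ε : ℝ} (hε : |ε| < 1) (x : ℝ) :
    HasDerivAt (eccentricAnomaly ε) (√(1 - ε ^ 2) / (1 + ε * cos x)) x := by
  set s := √(1 - ε ^ 2)
  have hs2 : s ^ 2 = 1 - ε ^ 2 := sq_sqrt (sub_pos.2 ((sq_lt_one_iff_abs_lt_one ε).2 hε)).le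
  have hu := one_add_mul_cos_pos hε x
  have hus : 0 < 1 + ε * cos x + s := by positivity
  have h := (hasDerivAt_id' x).sub
    ((((hasDerivAt_sin x).const_mul ε).div
      ((((hasDerivAt_cos x).const_mul ε).const_add 1).add_const s) hus.ne').arctan.const_mul 2)
  refine h.congr_deriv ?_
  simp only [Pi.div_apply]
  field_simp
  linear_combination -(1 + ε * cos x + s) * (ε ^ 2 * sin_sq_add_cos_sq x + hs2)

theorem hasDerivAt_mul_sin_div_one_add_mul_cos {ε : ℝ} (hε : |ε| < 1) (x : ℝ) :
    HasDerivAt (fun y => ε * sin y / (1 + ε * cos y))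
      (ε * (ε + cos x) / (1 + ε * cos x) ^ 2) x := by
  have h := ((hasDerivAt_sin x).const_mul ε).div
    (((hasDerivAt_cos x).const_mul ε).const_add 1) (one_add_mul_cos_pos hε x).ne'
  refine h.congr_deriv ?_
  linear_combination ε ^ 2 * sin_sq_add_cos_sq x / (1 + ε * cos x) ^ 2

theorem hasDerivAt_sommerfeld_antideriv {ε : ℝ} (hε : |ε| < 1) (x : ℝ) :
    HasDerivAt (fun y => eccentricAnomaly ε y / √(1 - ε ^ 2) - y + ε * sin y / (1 + ε * cos y))
      (ε ^ 2 * sin x ^ 2 / (1 + ε * cos x) ^ 2) x := by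
  have hs : 0 < √(1 - ε ^ 2) := sqrt_pos.2 (sub_pos.2 ((sq_lt_one_iff_abs_lt_one ε).2 hε))
  have hu := one_add_mul_cos_pos hε x
  refine ((((hasDerivAt_eccentricAnomaly hε x).div_const _).sub (hasDerivAt_id' x)).add
    (hasDerivAt_mul_sin_div_one_add_mul_cos hε x)).congr_deriv ?_
  field_simp
  linear_combination (-ε ^ 2) * sin_sq_add_cos_sq x

/-- Sommerfeld's radial quantum integral: for eccentricity `0 ≤ ε < 1`,
`(1/(2π)) ∫₀^{2π} ε² sin²φ / (1 + ε cos φ)² dφ = (1 - ε²)^{-1/2} - 1`. -/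
theorem sommerfeld_radial_integral (ε : ℝ) (hε0 : 0 ≤ ε) (hε1 : ε < 1) :
    (1 / (2 * Real.pi)) *
        ∫ φ in (0:ℝ)..(2 * Real.pi),
          ε ^ 2 * Real.sin φ ^ 2 / (1 + ε * Real.cos φ) ^ 2
      = (1 - ε ^ 2) ^ (-(1:ℝ) / 2) - 1 := by
  have hε : |ε| < 1 := abs_lt.2 ⟨by linarith, hε1⟩
  have h1ε : 0 < 1 - ε ^ 2 := sub_pos.2 ((sq_lt_one_iff_abs_lt_one ε).2 hε)
  have hcont : Continuous fun φ => ε ^ 2 * sin φ ^ 2 / (1 + ε * cos φ) ^ 2 := by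
    fun_prop (disch := exact fun φ => (pow_pos (one_add_mul_cos_pos hε φ) 2).ne')
  have hpow : (1 - ε ^ 2) ^ (-(1:ℝ) / 2) = (√(1 - ε ^ 2))⁻¹ := by
    rw [sqrt_eq_rpow, ← rpow_neg h1ε.le]
    norm_num
  rw [integral_eq_sub_of_hasDerivAt (fun x _ => hasDerivAt_sommerfeld_antideriv hε x)
    (hcont.intervalIntegrable _ _), hpow]
  simp only [eccentricAnomaly, sin_zero, cos_zero, sin_two_pi, cos_two_pi, mul_zero, mul_one,
    zero_div, arctan_zero, sub_zero, add_zero, sub_self]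
  field_simp
end

section
/- Let m, c, ħ, α, Z, a, E, ω, n_θ be positive real numbers, let n_r ≥ 0 be real, let ε ∈ [0,1), and assume n_θ > αZ. Suppose the following hold: (i) α²Z² + (ω² − 1) n_θ² = 0; (ii) E = c ω² ħ n_θ² / (a Z α (1 − ε²)); (iii) E²/(c⁴ m²) + ω² ħ² n_θ² / (a² c² m² (1 − ε²)) = 1; (iv) 1/(1 − ε²) = (1 + n_r/(ω n_θ))². Then E / (m c²) = (1 + α²Z² / (n_r + √(n_θ² − α²Z²))²)^{−1/2}. -/
open Real

/-!
Eliminating `ħ` between the matching conditions (ii) and (iii) leaves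
`(E / m c²)² (1 + α²Z² (1 - ε²) / (ω n_θ)²) = 1`. The quantization condition (iv) turns
`(1 - ε²) / (ω n_θ)²` into `1 / (n_r + ω n_θ)²`, and by (i) the precession-reduced angular
momentum `ω n_θ` is `√(n_θ² - α²Z²)`. Taking the positive square root gives the formula.
-/

theorem eq_rpow_neg_half_of_sq_mul_eq_one {y X : ℝ} (hy : 0 ≤ y) (h : y ^ 2 * X = 1) :
    y = X ^ (-(1 : ℝ) / 2) := by
  have hX : X = (y ^ 2)⁻¹ := eq_inv_of_mul_eq_one_right h
  rw [hX, neg_div, Real.rpow_neg (by positivity), Real.inv_rpow (by positivity), inv_inv,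
    ← Real.sqrt_eq_rpow, Real.sqrt_sq hy]

theorem sommerfeld_energy_relation {m c hbar α Z a E ω nθ D : ℝ}
    (hm : m ≠ 0) (hc : c ≠ 0) (hα : α ≠ 0) (hZ : Z ≠ 0) (ha : a ≠ 0) (hω : ω ≠ 0)
    (hnθ : nθ ≠ 0) (hD : D ≠ 0)
    (h2 : E = c * ω ^ 2 * hbar * nθ ^ 2 / (a * Z * α * D))
    (h3 : E ^ 2 / (c ^ 4 * m ^ 2) + ω ^ 2 * hbar ^ 2 * nθ ^ 2 / (a ^ 2 * c ^ 2 * m ^ 2 * D) = 1) :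
    (E / (m * c ^ 2)) ^ 2 * (1 + α ^ 2 * Z ^ 2 * (D / (ω * nθ) ^ 2)) = 1 := by
  subst h2
  field_simp at h3 ⊢
  linear_combination h3

theorem div_sq_eq_of_one_div_eq_sq {D n s : ℝ} (hs : s ≠ 0) (h : 1 / D = (1 + n / s) ^ 2) :
    D / s ^ 2 = 1 / (n + s) ^ 2 := by
  have hD : D = ((1 + n / s) ^ 2)⁻¹ := by rw [← h, one_div, inv_inv]
  rw [hD]
  field_simp
  ring

theorem sommerfeld_fine_structure_general
    (m c hbar α Z a E ω nθ : ℝ) (n_r : ℝ)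
    (hm : 0 < m) (hc : 0 < c) (hα : 0 < α) (hZ : 0 < Z)
    (ha : 0 < a) (hE : 0 < E) (hω : 0 < ω) (hnθ : 0 < nθ)
    (ε : ℝ) (hε0 : 0 ≤ ε) (hε1 : ε < 1)
    (h1 : α ^ 2 * Z ^ 2 + (ω ^ 2 - 1) * nθ ^ 2 = 0)
    (h2 : E = c * ω ^ 2 * hbar * nθ ^ 2 / (a * Z * α * (1 - ε ^ 2)))
    (h3 : E ^ 2 / (c ^ 4 * m ^ 2)
          + ω ^ 2 * hbar ^ 2 * nθ ^ 2 / (a ^ 2 * c ^ 2 * m ^ 2 * (1 - ε ^ 2)) = 1)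
    (h4 : 1 / (1 - ε ^ 2) = (1 + n_r / (ω * nθ)) ^ 2) :
    E / (m * c ^ 2)
      = (1 + α ^ 2 * Z ^ 2 / (n_r + Real.sqrt (nθ ^ 2 - α ^ 2 * Z ^ 2)) ^ 2)
          ^ (-(1:ℝ) / 2) := by
  have hD : 1 - ε ^ 2 ≠ 0 := by nlinarith
  have hprecession : ω * nθ = √(nθ ^ 2 - α ^ 2 * Z ^ 2) :=
    ((Real.sqrt_eq_iff_mul_self_eq_of_pos (by positivity)).2 (by linear_combination h1)).symm
  have henergy := sommerfeld_energy_relation hm.ne' hc.ne' hα.ne' hZ.ne' ha.ne' hω.ne' hnθ.ne'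
    hD h2 h3
  rw [div_sq_eq_of_one_div_eq_sq (by positivity) h4, mul_one_div, hprecession] at henergy
  exact eq_rpow_neg_half_of_sq_mul_eq_one (by positivity) henergy

/-- Sommerfeld's fine-structure formula from the conditions of his derivation:
given (i) the vanishing of the quadratic coefficient, (ii)–(iii) the energy/orbit
matching conditions, and (iv) the radial quantization condition, one has
`E/(mc²) = (1 + α²Z²/(n_r + √(n_θ² - α²Z²))²)^{-1/2}`. -/
theorem sommerfeld_fine_structure
    (m c hbar α Z a E ω nθ : ℝ) (n_r : ℝ)
    (hm : 0 < m) (hc : 0 < c) (hbar_pos : 0 < hbar) (hα : 0 < α) (hZ : 0 < Z)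
    (ha : 0 < a) (hE : 0 < E) (hω : 0 < ω) (hnθ : 0 < nθ)
    (hnr : 0 ≤ n_r) (ε : ℝ) (hε0 : 0 ≤ ε) (hε1 : ε < 1)
    (hbound : α * Z < nθ)
    (h1 : α ^ 2 * Z ^ 2 + (ω ^ 2 - 1) * nθ ^ 2 = 0)
    (h2 : E = c * ω ^ 2 * hbar * nθ ^ 2 / (a * Z * α * (1 - ε ^ 2)))
    (h3 : E ^ 2 / (c ^ 4 * m ^ 2)
          + ω ^ 2 * hbar ^ 2 * nθ ^ 2 / (a ^ 2 * c ^ 2 * m ^ 2 * (1 - ε ^ 2)) = 1)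
    (h4 : 1 / (1 - ε ^ 2) = (1 + n_r / (ω * nθ)) ^ 2) :
    E / (m * c ^ 2)
      = (1 + α ^ 2 * Z ^ 2 / (n_r + Real.sqrt (nθ ^ 2 - α ^ 2 * Z ^ 2)) ^ 2)
          ^ (-(1:ℝ) / 2) :=
  sommerfeld_fine_structure_general m c hbar α Z a E ω nθ n_r hm hc hα hZ ha hE hω hnθ ε hε0 hε1 h1
    h2 h3 h4
end

section
/- Let n_r ≥ 0 and n_θ ≥ 1 be integers. Define, for real μ with |μ| < n_θ, N(μ) = √(n_θ² − μ²) and A(μ) = (n_r + N(μ)) · √(μ² + (n_r + N(μ))²). Then, as μ → 0, A(μ) − [(n_r + n_θ)² − μ² (2n_r + n_θ)/(2n_θ) − (μ⁴/8)(2n_r/n_θ³ + 1/(n_r + n_θ)²)] = O(μ⁶). -/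
/-!
Everything is a function of `s = μ²`. Expansions `p₀ + p₁ s + p₂ s² + O(s³)` are closed under
sums and products, and under square roots when `p₀ > 0`: a square root is controlled through its
square, since `√f - R = (f - R²) / (√f + R)`. Applying these rules to `N` and then to `A` and
substituting `s = μ²` gives the expansion.
-/

open Real Filter Asymptotics Topology

theorem Asymptotics.IsBigO.mul_tendsto {α : Type*} {l : Filter α} {f k q : α → ℝ} {b : ℝ}
    (h : f =O[l] k) (hq : Tendsto q l (𝓝 b)) : (fun x => f x * q x) =O[l] k := by
  simpa using h.mul (hq.isBigO_one ℝ)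

theorem isBigO_sub_of_isBigO_sq_sub_sq {α : Type*} {l : Filter α} {f g k : α → ℝ} {a : ℝ}
    (ha : 0 < a) (hf : ∀ᶠ x in l, 0 ≤ f x) (hg : Tendsto g l (𝓝 a))
    (h : (fun x => f x ^ 2 - g x ^ 2) =O[l] k) : (fun x => f x - g x) =O[l] k := by
  have hg_pos : ∀ᶠ x in l, a / 2 < g x := hg.eventually (lt_mem_nhds (half_lt_self ha))
  have hinv : (fun x => (f x + g x)⁻¹) =O[l] fun _ => (1 : ℝ) := by
    refine IsBigO.of_bound (2 / a) ?_
    filter_upwards [hf, hg_pos] with x hfx hgx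
    rw [norm_inv, norm_one, mul_one, Real.norm_of_nonneg (by linarith), ← inv_div]
    exact inv_anti₀ (by positivity) (by linarith)
  refine (h.mul hinv).congr' ?_ (by simp)
  filter_upwards [hf, hg_pos] with x hfx hgx
  field_simp [show f x + g x ≠ 0 by linarith]
  ring

theorem tendsto_quadratic_nhds_zero (a b c : ℝ) :
    Tendsto (fun s : ℝ => a + b * s + c * s ^ 2) (𝓝 0) (𝓝 a) := by
  simpa using (by fun_prop : Continuous fun s : ℝ => a + b * s + c * s ^ 2).tendsto 0

def HasQuadExpansion (f : ℝ → ℝ) (p₀ p₁ p₂ : ℝ) : Prop :=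
  (fun s => f s - (p₀ + p₁ * s + p₂ * s ^ 2)) =O[𝓝 0] fun s => s ^ 3

theorem hasQuadExpansion_const (a : ℝ) : HasQuadExpansion (fun _ => a) a 0 0 := by
  simpa [HasQuadExpansion] using isBigO_zero (fun s : ℝ => s ^ 3) (𝓝 0)

theorem hasQuadExpansion_id : HasQuadExpansion id 0 1 0 := by
  simpa [HasQuadExpansion] using isBigO_zero (fun s : ℝ => s ^ 3) (𝓝 0)

namespace HasQuadExpansion

variable {f g : ℝ → ℝ} {p₀ p₁ p₂ q₀ q₁ q₂ : ℝ}

theorem tendsto (hf : HasQuadExpansion f p₀ p₁ p₂) : Tendsto f (𝓝 0) (𝓝 p₀) := by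
  have hcube : Tendsto (fun s : ℝ => s ^ 3) (𝓝 0) (𝓝 0) := by
    simpa using (continuous_pow 3).tendsto (0 : ℝ)
  simpa using (hf.trans_tendsto hcube).add (tendsto_quadratic_nhds_zero p₀ p₁ p₂)

theorem add (hf : HasQuadExpansion f p₀ p₁ p₂) (hg : HasQuadExpansion g q₀ q₁ q₂) :
    HasQuadExpansion (fun s => f s + g s) (p₀ + q₀) (p₁ + q₁) (p₂ + q₂) :=
  (IsBigO.add hf hg).congr_left fun s => by ring

theorem sub (hf : HasQuadExpansion f p₀ p₁ p₂) (hg : HasQuadExpansion g q₀ q₁ q₂) :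
    HasQuadExpansion (fun s => f s - g s) (p₀ - q₀) (p₁ - q₁) (p₂ - q₂) :=
  (IsBigO.sub hf hg).congr_left fun s => by ring

theorem mul (hf : HasQuadExpansion f p₀ p₁ p₂) (hg : HasQuadExpansion g q₀ q₁ q₂) :
    HasQuadExpansion (fun s => f s * g s)
      (p₀ * q₀) (p₀ * q₁ + p₁ * q₀) (p₀ * q₂ + p₁ * q₁ + p₂ * q₀) := by
  -- `f g - T = (f - P) g + (g - Q) P + s³ (p₁ q₂ + p₂ q₁ + p₂ q₂ s)` with `T` the truncated `P Q`
  have hcube := (isBigO_refl (fun s : ℝ => s ^ 3) (𝓝 0)).mul_tendsto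
    (tendsto_quadratic_nhds_zero (p₁ * q₂ + p₂ * q₁) (p₂ * q₂) 0)
  have hP := tendsto_quadratic_nhds_zero p₀ p₁ p₂
  exact ((hf.mul_tendsto hg.tendsto).add ((hg.mul_tendsto hP).add hcube)).congr_left
    fun s => by ring

theorem sqrt {r₀ r₁ r₂ : ℝ} (hf : HasQuadExpansion f p₀ p₁ p₂) (hr₀ : 0 < r₀)
    (h₀ : r₀ ^ 2 = p₀) (h₁ : 2 * r₀ * r₁ = p₁) (h₂ : 2 * r₀ * r₂ + r₁ ^ 2 = p₂) :
    HasQuadExpansion (fun s => √(f s)) r₀ r₁ r₂ := by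
  subst h₀ h₁ h₂
  have hpos : ∀ᶠ s in 𝓝 0, 0 ≤ f s := hf.tendsto.eventually (eventually_ge_nhds (by positivity))
  refine isBigO_sub_of_isBigO_sq_sub_sq hr₀ (Eventually.of_forall fun s => Real.sqrt_nonneg _)
    (tendsto_quadratic_nhds_zero r₀ r₁ r₂) ?_
  have hcube := (isBigO_refl (fun s : ℝ => s ^ 3) (𝓝 0)).mul_tendsto
    (tendsto_quadratic_nhds_zero (2 * r₁ * r₂) (r₂ ^ 2) 0)
  refine (IsBigO.sub hf hcube).congr' ?_ .rfl
  filter_upwards [hpos] with s hs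
  rw [Real.sq_sqrt hs]
  ring

theorem comp_sq (hf : HasQuadExpansion f p₀ p₁ p₂) :
    (fun t => f (t ^ 2) - (p₀ + p₁ * t ^ 2 + p₂ * t ^ 4)) =O[𝓝 0] fun t => t ^ 6 := by
  have hsq : Tendsto (fun t : ℝ => t ^ 2) (𝓝 0) (𝓝 0) := by
    simpa using (continuous_pow 2).tendsto (0 : ℝ)
  simpa only [Function.comp_def, ← pow_mul] using hf.comp_tendsto hsq

end HasQuadExpansion

theorem hasQuadExpansion_semimajorAxis {nr c : ℝ} (hc : 0 < c) (hm : 0 < nr + c) :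
    HasQuadExpansion (fun s => (nr + √(c ^ 2 - s)) * √(s + (nr + √(c ^ 2 - s)) ^ 2))
      ((nr + c) ^ 2) (-(2 * nr + c) / (2 * c)) (-(2 * nr / c ^ 3 + 1 / (nr + c) ^ 2) / 8) := by
  have hN : HasQuadExpansion (fun s => √(c ^ 2 - s)) c (-1 / (2 * c)) (-1 / (8 * c ^ 3)) :=
    ((hasQuadExpansion_const _).sub hasQuadExpansion_id).sqrt hc (by ring)
      (by field_simp; ring) (by field_simp; ring)
  have hu := (hasQuadExpansion_const nr).add hN
  have hS : HasQuadExpansion (fun s => √(s + (nr + √(c ^ 2 - s)) ^ 2)) (nr + c)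
      (-nr / (2 * (nr + c) * c))
      (-nr / (8 * (nr + c) * c ^ 3) - nr ^ 2 / (8 * (nr + c) ^ 3 * c ^ 2)) := by
    simpa only [sq, id] using (hasQuadExpansion_id.add (hu.mul hu)).sqrt hm (by ring)
      (by field_simp; ring) (by field_simp; ring)
  convert hu.mul hS using 1 <;> field_simp <;> ring

/-- Nonrelativistic expansion of the quantized semimajor axis of Sommerfeld's
relativistic Kepler orbits (in units of the Bohr radius): for integers
`n_r ≥ 0`, `n_θ ≥ 1`, with `N(μ) = √(n_θ² - μ²)` and
`A(μ) = (n_r + N(μ))·√(μ² + (n_r + N(μ))²)`, as `μ → 0`,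
`A(μ) = (n_r+n_θ)² - μ²(2n_r+n_θ)/(2n_θ)
        - (μ⁴/8)(2n_r/n_θ³ + 1/(n_r+n_θ)²) + O(μ⁶)`. -/
theorem semimajor_axis_expansion (n_r nθ : ℕ) (hnθ : 1 ≤ nθ)
    (N A : ℝ → ℝ)
    (hN : ∀ μ : ℝ, |μ| < (nθ : ℝ) → N μ = Real.sqrt ((nθ : ℝ) ^ 2 - μ ^ 2))
    (hA : ∀ μ : ℝ, |μ| < (nθ : ℝ) →
      A μ = ((n_r : ℝ) + N μ) * Real.sqrt (μ ^ 2 + ((n_r : ℝ) + N μ) ^ 2)) :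
    (fun μ : ℝ => A μ -
        (((n_r : ℝ) + (nθ : ℝ)) ^ 2
          - μ ^ 2 * (2 * (n_r : ℝ) + (nθ : ℝ)) / (2 * (nθ : ℝ))
          - μ ^ 4 / 8 * (2 * (n_r : ℝ) / (nθ : ℝ) ^ 3
               + 1 / ((n_r : ℝ) + (nθ : ℝ)) ^ 2)))
      =O[nhds 0] fun μ : ℝ => μ ^ 6 := by
  have hc : (0 : ℝ) < nθ := by exact_mod_cast hnθ
  have hm : (0 : ℝ) < n_r + nθ := by positivity
  refine (hasQuadExpansion_semimajorAxis hc hm).comp_sq.congr' ?_ EventuallyEq.rfl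
  filter_upwards [eventually_abs_sub_lt (0 : ℝ) hc] with μ hμ
  rw [sub_zero] at hμ
  rw [hA μ hμ, hN μ hμ]
  ring
end
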